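/- arXiv:2605.07829 — 3 statements merged into one kernel-verified Lean document; each statement's English description precedes it below -/
import Mathlib

section
/- Global optimality of the likelihood-ratio root: under the MLR assumptions, let c* ∈ (a,b) be the unique point with Λ(c*) = ρ. Then c* is the unique global minimiser of the weighted misclassification risk R over [a,b]; that is, R(c) > R(c*) for every c ∈ [a,b] with c ≠ c*. -/
/-!
The risk `R c = λ₁π₁ F₁ c + λ₀π₀ (1 - F₀ c)` has derivative `λ₁π₁ f₁ - λ₀π₀ f₀`, whose sign is
that of `f₁ / f₀ - ρ`. Since the likelihood ratio is strictly increasing and equals `ρ` at `c*`,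
`R` strictly decreases on `[a, c*]` and strictly increases on `[c*, b]`.
-/

open Set

/-- The risk `R`, with weights `w₀ = λ₀π₀` and `w₁ = λ₁π₁`. -/
def weightedRisk (w₀ w₁ : ℝ) (F₀ F₁ : ℝ → ℝ) (c : ℝ) : ℝ :=
  w₁ * F₁ c + w₀ * (1 - F₀ c)

section weightedRisk

variable {w₀ w₁ : ℝ} {F₀ F₁ : ℝ → ℝ}

theorem continuousOn_weightedRisk {s : Set ℝ} (h₀ : ContinuousOn F₀ s) (h₁ : ContinuousOn F₁ s) :
    ContinuousOn (weightedRisk w₀ w₁ F₀ F₁) s :=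
  (continuousOn_const.mul h₁).add (continuousOn_const.mul (continuousOn_const.sub h₀))

theorem hasDerivAt_weightedRisk {f₀ f₁ c : ℝ} (h₀ : HasDerivAt F₀ f₀ c)
    (h₁ : HasDerivAt F₁ f₁ c) :
    HasDerivAt (weightedRisk w₀ w₁ F₀ F₁) (w₁ * f₁ - w₀ * f₀) c := by
  rw [sub_eq_add_neg, ← mul_neg]
  exact (h₁.const_mul w₁).add ((h₀.const_sub 1).const_mul w₀)

end weightedRisk

theorem mul_sub_mul_neg_of_div_lt_div {w₀ w₁ p₀ p₁ : ℝ} (hw₁ : 0 < w₁) (hp₀ : 0 < p₀)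
    (h : p₁ / p₀ < w₀ / w₁) : w₁ * p₁ - w₀ * p₀ < 0 := by
  rw [div_lt_div_iff₀ hp₀ hw₁] at h
  linarith

theorem mul_sub_mul_pos_of_div_lt_div {w₀ w₁ p₀ p₁ : ℝ} (hw₁ : 0 < w₁) (hp₀ : 0 < p₀)
    (h : w₀ / w₁ < p₁ / p₀) : 0 < w₁ * p₁ - w₀ * p₀ := by
  rw [div_lt_div_iff₀ hw₁ hp₀] at h
  linarith

theorem lt_of_hasDerivAt_neg_left_pos_right {f f' : ℝ → ℝ} {a b m : ℝ} (hm : m ∈ Icc a b)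
    (hf : ContinuousOn f (Icc a b)) (hf' : ∀ x ∈ Ioo a b, HasDerivAt f (f' x) x)
    (hneg : ∀ x ∈ Ioo a m, f' x < 0) (hpos : ∀ x ∈ Ioo m b, 0 < f' x) :
    ∀ x ∈ Icc a b, x ≠ m → f m < f x := by
  have hanti : StrictAntiOn f (Icc a m) := by
    refine strictAntiOn_of_hasDerivWithinAt_neg (f' := f') (convex_Icc a m)
      (hf.mono (Icc_subset_Icc_right hm.2)) (fun x hx => ?_) (fun x hx => ?_)
    · rw [interior_Icc] at hx ⊢
      exact (hf' x ⟨hx.1, hx.2.trans_le hm.2⟩).hasDerivWithinAt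
    · exact hneg x (by rwa [interior_Icc] at hx)
  have hmono : StrictMonoOn f (Icc m b) := by
    refine strictMonoOn_of_hasDerivWithinAt_pos (f' := f') (convex_Icc m b)
      (hf.mono (Icc_subset_Icc_left hm.1)) (fun x hx => ?_) (fun x hx => ?_)
    · rw [interior_Icc] at hx ⊢
      exact (hf' x ⟨hm.1.trans_lt hx.1, hx.2⟩).hasDerivWithinAt
    · exact hpos x (by rwa [interior_Icc] at hx)
  intro x hx hxm
  rcases hxm.lt_or_gt with hlt | hgt
  · exact hanti ⟨hx.1, hlt.le⟩ ⟨hm.1, le_rfl⟩ hlt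
  · exact hmono ⟨le_rfl, hm.2⟩ ⟨hgt.le, hx.2⟩ hgt

theorem mlr_root_global_optimality_general
    (a b lam0 lam1 pi0 pi1 : ℝ)
    (hlam1 : 0 < lam1) (hpi1 : 0 < pi1)
    (F0 F1 f0 f1 : ℝ → ℝ)
    (hF0cont : ContinuousOn F0 (Set.Icc a b)) (hF1cont : ContinuousOn F1 (Set.Icc a b))
    (hF0 : ∀ c ∈ Set.Ioo a b, HasDerivAt F0 (f0 c) c)
    (hF1 : ∀ c ∈ Set.Ioo a b, HasDerivAt F1 (f1 c) c)
    (hf0pos : ∀ c ∈ Set.Ioo a b, 0 < f0 c)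
    (hmono : StrictMonoOn (fun c => f1 c / f0 c) (Set.Ioo a b))
    (cs : ℝ) (hcs : cs ∈ Set.Ioo a b)
    (hcs_root : f1 cs / f0 cs = lam0 * pi0 / (lam1 * pi1)) :
    ∀ c ∈ Set.Icc a b, c ≠ cs →
      lam1 * pi1 * F1 cs + lam0 * pi0 * (1 - F0 cs) <
        lam1 * pi1 * F1 c + lam0 * pi0 * (1 - F0 c) := by
  have hw₁ : 0 < lam1 * pi1 := mul_pos hlam1 hpi1
  refine lt_of_hasDerivAt_neg_left_pos_right (f := weightedRisk (lam0 * pi0) (lam1 * pi1) F0 F1)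
    (Ioo_subset_Icc_self hcs) (continuousOn_weightedRisk hF0cont hF1cont)
    (fun x hx => hasDerivAt_weightedRisk (hF0 x hx) (hF1 x hx)) (fun x hx => ?_) (fun x hx => ?_)
  · have hx' : x ∈ Ioo a b := ⟨hx.1, hx.2.trans hcs.2⟩
    exact mul_sub_mul_neg_of_div_lt_div hw₁ (hf0pos x hx') (hcs_root ▸ hmono hx' hcs hx.2)
  · have hx' : x ∈ Ioo a b := ⟨hcs.1.trans hx.1, hx.2⟩
    exact mul_sub_mul_pos_of_div_lt_div hw₁ (hf0pos x hx') (hcs_root ▸ hmono hcs hx' hx.1)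

/-- Global optimality of the likelihood-ratio root: under the MLR assumptions, the unique
point `c* ∈ (a,b)` with `f1(c*)/f0(c*) = ρ = (λ0·π0)/(λ1·π1)` is the unique global
minimiser of the weighted misclassification risk
`R(c) = λ1·π1·F1(c) + λ0·π0·(1 − F0(c))` over `[a,b]`:
`R(c) > R(c*)` for every `c ∈ [a,b]`, `c ≠ c*`. -/
theorem mlr_root_global_optimality
    (a b lam0 lam1 pi0 pi1 : ℝ) (hab : a < b)
    (hlam0 : 0 < lam0) (hlam1 : 0 < lam1) (hpi0 : 0 < pi0) (hpi1 : 0 < pi1)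
    (F0 F1 f0 f1 : ℝ → ℝ)
    (hF0cont : ContinuousOn F0 (Set.Icc a b)) (hF1cont : ContinuousOn F1 (Set.Icc a b))
    (hF0 : ∀ c ∈ Set.Ioo a b, HasDerivAt F0 (f0 c) c)
    (hF1 : ∀ c ∈ Set.Ioo a b, HasDerivAt F1 (f1 c) c)
    (hf0cont : ContinuousOn f0 (Set.Ioo a b)) (hf1cont : ContinuousOn f1 (Set.Ioo a b))
    (hf0pos : ∀ c ∈ Set.Ioo a b, 0 < f0 c) (hf1pos : ∀ c ∈ Set.Ioo a b, 0 < f1 c)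
    (hmono : StrictMonoOn (fun c => f1 c / f0 c) (Set.Ioo a b))
    (La Lb : ℝ)
    (hLa : Filter.Tendsto (fun c => f1 c / f0 c) (nhdsWithin a (Set.Ioi a)) (nhds La))
    (hLb : Filter.Tendsto (fun c => f1 c / f0 c) (nhdsWithin b (Set.Iio b)) (nhds Lb))
    (hLaρ : La < lam0 * pi0 / (lam1 * pi1))
    (hLbρ : lam0 * pi0 / (lam1 * pi1) < Lb)
    (cs : ℝ) (hcs : cs ∈ Set.Ioo a b)
    (hcs_root : f1 cs / f0 cs = lam0 * pi0 / (lam1 * pi1)) :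
    ∀ c ∈ Set.Icc a b, c ≠ cs →
      lam1 * pi1 * F1 cs + lam0 * pi0 * (1 - F0 cs) <
        lam1 * pi1 * F1 c + lam0 * pi0 * (1 - F0 c) :=
  mlr_root_global_optimality_general a b lam0 lam1 pi0 pi1 hlam1 hpi1 F0 F1 f0 f1 hF0cont hF1cont
    hF0 hF1 hf0pos hmono cs hcs hcs_root
end

section
/- Sign structure of the risk derivative and strict monotonicity of the risk: under the MLR assumptions, let c* ∈ (a,b) be the unique point with Λ(c*) = ρ. Then the derivative φ(c) = λ1·π1·f1(c) − λ0·π0·f0(c) of R satisfies φ(c) < 0 for all c ∈ (a, c*) and φ(c) > 0 for all c ∈ (c*, b); consequently R is strictly decreasing on [a, c*] and strictly increasing on [c*, b]. -/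
/-!
With `w₁ = λ₁π₁ > 0`, the derivative `w₁ f₁ - w₀ f₀ = w₁ f₀ (Λ - ρ)` of the risk has the sign of
`Λ - ρ`, since `f₀ > 0`. As `Λ` is strictly increasing and `Λ(c*) = ρ`, this sign is negative
left of `c*` and positive right of it, and the mean value theorem turns the sign of the derivative
on an open interval into strict monotonicity of the continuous risk on the closed interval.
-/

open Set

section Ratio

variable {x y p q : ℝ}

lemma mul_sub_mul_neg_of_div_lt_div_s5 (hy : 0 < y) (hq : 0 < q) (h : x / y < p / q) :
    q * x - p * y < 0 := by
  rw [div_lt_div_iff₀ hy hq] at h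
  linarith

lemma mul_sub_mul_pos_of_div_lt_div_s5 (hy : 0 < y) (hq : 0 < q) (h : p / q < x / y) :
    0 < q * x - p * y := by
  rw [div_lt_div_iff₀ hq hy] at h
  linarith

end Ratio

section LikelihoodRatio

variable {f0 f1 : ℝ → ℝ} {s : Set ℝ} {p q c cs : ℝ}

lemma mul_sub_mul_neg_of_lt_of_strictMonoOn_div
    (hmono : StrictMonoOn (fun c => f1 c / f0 c) s) (hc : c ∈ s) (hcs : cs ∈ s) (hlt : c < cs)
    (hroot : f1 cs / f0 cs = p / q) (hf0 : 0 < f0 c) (hq : 0 < q) :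
    q * f1 c - p * f0 c < 0 :=
  mul_sub_mul_neg_of_div_lt_div_s5 hf0 hq (hroot ▸ hmono hc hcs hlt)

lemma mul_sub_mul_pos_of_lt_of_strictMonoOn_div
    (hmono : StrictMonoOn (fun c => f1 c / f0 c) s) (hc : c ∈ s) (hcs : cs ∈ s) (hlt : cs < c)
    (hroot : f1 cs / f0 cs = p / q) (hf0 : 0 < f0 c) (hq : 0 < q) :
    0 < q * f1 c - p * f0 c :=
  mul_sub_mul_pos_of_div_lt_div_s5 hf0 hq (hroot ▸ hmono hcs hc hlt)

end LikelihoodRatio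

section Risk

variable {F0 F1 : ℝ → ℝ} {w0 w1 : ℝ}

lemma hasDerivAt_risk {d0 d1 x : ℝ} (hF0 : HasDerivAt F0 d0 x) (hF1 : HasDerivAt F1 d1 x) :
    HasDerivAt (fun c => w1 * F1 c + w0 * (1 - F0 c)) (w1 * d1 - w0 * d0) x := by
  exact ((hF1.const_mul w1).add ((hF0.const_sub 1).const_mul w0)).congr_deriv (by ring)

lemma continuousOn_risk {s : Set ℝ} (hF0 : ContinuousOn F0 s) (hF1 : ContinuousOn F1 s) :
    ContinuousOn (fun c => w1 * F1 c + w0 * (1 - F0 c)) s :=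
  (continuousOn_const.mul hF1).add (continuousOn_const.mul (continuousOn_const.sub hF0))

end Risk

section Monotone

variable {f f' : ℝ → ℝ} {x y : ℝ}

lemma strictAntiOn_Icc_of_hasDerivAt_neg (hf : ContinuousOn f (Icc x y))
    (hf' : ∀ c ∈ Ioo x y, HasDerivAt f (f' c) c) (hneg : ∀ c ∈ Ioo x y, f' c < 0) :
    StrictAntiOn f (Icc x y) :=
  strictAntiOn_of_hasDerivWithinAt_neg (convex_Icc x y) hf
    (fun c hc => (hf' c (by rwa [interior_Icc] at hc)).hasDerivWithinAt)
    (fun c hc => hneg c (by rwa [interior_Icc] at hc))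

lemma strictMonoOn_Icc_of_hasDerivAt_pos (hf : ContinuousOn f (Icc x y))
    (hf' : ∀ c ∈ Ioo x y, HasDerivAt f (f' c) c) (hpos : ∀ c ∈ Ioo x y, 0 < f' c) :
    StrictMonoOn f (Icc x y) :=
  strictMonoOn_of_hasDerivWithinAt_pos (convex_Icc x y) hf
    (fun c hc => (hf' c (by rwa [interior_Icc] at hc)).hasDerivWithinAt)
    (fun c hc => hpos c (by rwa [interior_Icc] at hc))

end Monotone

theorem mlr_risk_sign_structure_general
    (a b lam0 lam1 pi0 pi1 : ℝ)
    (hlam1 : 0 < lam1) (hpi1 : 0 < pi1)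
    (F0 F1 f0 f1 : ℝ → ℝ)
    (hF0cont : ContinuousOn F0 (Set.Icc a b)) (hF1cont : ContinuousOn F1 (Set.Icc a b))
    (hF0 : ∀ c ∈ Set.Ioo a b, HasDerivAt F0 (f0 c) c)
    (hF1 : ∀ c ∈ Set.Ioo a b, HasDerivAt F1 (f1 c) c)
    (hf0pos : ∀ c ∈ Set.Ioo a b, 0 < f0 c)
    (hmono : StrictMonoOn (fun c => f1 c / f0 c) (Set.Ioo a b))
    (cs : ℝ) (hcs : cs ∈ Set.Ioo a b)
    (hcs_root : f1 cs / f0 cs = lam0 * pi0 / (lam1 * pi1)) :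
    (∀ c ∈ Set.Ioo a cs, lam1 * pi1 * f1 c - lam0 * pi0 * f0 c < 0) ∧
    (∀ c ∈ Set.Ioo cs b, 0 < lam1 * pi1 * f1 c - lam0 * pi0 * f0 c) ∧
    StrictAntiOn (fun c => lam1 * pi1 * F1 c + lam0 * pi0 * (1 - F0 c)) (Set.Icc a cs) ∧
    StrictMonoOn (fun c => lam1 * pi1 * F1 c + lam0 * pi0 * (1 - F0 c)) (Set.Icc cs b) := by
  have hw1 : 0 < lam1 * pi1 := mul_pos hlam1 hpi1
  have hleft : Ioo a cs ⊆ Ioo a b := Ioo_subset_Ioo_right hcs.2.le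
  have hright : Ioo cs b ⊆ Ioo a b := Ioo_subset_Ioo_left hcs.1.le
  have hneg : ∀ c ∈ Ioo a cs, lam1 * pi1 * f1 c - lam0 * pi0 * f0 c < 0 := fun c hc =>
    mul_sub_mul_neg_of_lt_of_strictMonoOn_div hmono (hleft hc) hcs hc.2 hcs_root
      (hf0pos c (hleft hc)) hw1
  have hpos : ∀ c ∈ Ioo cs b, 0 < lam1 * pi1 * f1 c - lam0 * pi0 * f0 c := fun c hc =>
    mul_sub_mul_pos_of_lt_of_strictMonoOn_div hmono (hright hc) hcs hc.1 hcs_root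
      (hf0pos c (hright hc)) hw1
  have hderiv : ∀ c ∈ Ioo a b, HasDerivAt (fun c => lam1 * pi1 * F1 c + lam0 * pi0 * (1 - F0 c))
      (lam1 * pi1 * f1 c - lam0 * pi0 * f0 c) c := fun c hc =>
    hasDerivAt_risk (hF0 c hc) (hF1 c hc)
  have hcont := continuousOn_risk (w0 := lam0 * pi0) (w1 := lam1 * pi1) hF0cont hF1cont
  refine ⟨hneg, hpos, ?_, ?_⟩
  · exact strictAntiOn_Icc_of_hasDerivAt_neg
      (hcont.mono (Icc_subset_Icc_right hcs.2.le)) (fun c hc => hderiv c (hleft hc)) hneg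
  · exact strictMonoOn_Icc_of_hasDerivAt_pos
      (hcont.mono (Icc_subset_Icc_left hcs.1.le)) (fun c hc => hderiv c (hright hc)) hpos

/-- Sign structure of the risk derivative and strict monotonicity of the risk: under the
MLR assumptions, with `c* ∈ (a,b)` the unique point where `f1(c*)/f0(c*) = ρ`, the
derivative `φ(c) = λ1·π1·f1(c) − λ0·π0·f0(c)` of the risk `R` is negative on `(a,c*)`
and positive on `(c*,b)`; consequently `R` is strictly decreasing on `[a,c*]` and
strictly increasing on `[c*,b]`. -/
theorem mlr_risk_sign_structure
    (a b lam0 lam1 pi0 pi1 : ℝ) (hab : a < b)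
    (hlam0 : 0 < lam0) (hlam1 : 0 < lam1) (hpi0 : 0 < pi0) (hpi1 : 0 < pi1)
    (F0 F1 f0 f1 : ℝ → ℝ)
    (hF0cont : ContinuousOn F0 (Set.Icc a b)) (hF1cont : ContinuousOn F1 (Set.Icc a b))
    (hF0 : ∀ c ∈ Set.Ioo a b, HasDerivAt F0 (f0 c) c)
    (hF1 : ∀ c ∈ Set.Ioo a b, HasDerivAt F1 (f1 c) c)
    (hf0cont : ContinuousOn f0 (Set.Ioo a b)) (hf1cont : ContinuousOn f1 (Set.Ioo a b))
    (hf0pos : ∀ c ∈ Set.Ioo a b, 0 < f0 c) (hf1pos : ∀ c ∈ Set.Ioo a b, 0 < f1 c)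
    (hmono : StrictMonoOn (fun c => f1 c / f0 c) (Set.Ioo a b))
    (La Lb : ℝ)
    (hLa : Filter.Tendsto (fun c => f1 c / f0 c) (nhdsWithin a (Set.Ioi a)) (nhds La))
    (hLb : Filter.Tendsto (fun c => f1 c / f0 c) (nhdsWithin b (Set.Iio b)) (nhds Lb))
    (hLaρ : La < lam0 * pi0 / (lam1 * pi1))
    (hLbρ : lam0 * pi0 / (lam1 * pi1) < Lb)
    (cs : ℝ) (hcs : cs ∈ Set.Ioo a b)
    (hcs_root : f1 cs / f0 cs = lam0 * pi0 / (lam1 * pi1)) :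
    (∀ c ∈ Set.Ioo a cs, lam1 * pi1 * f1 c - lam0 * pi0 * f0 c < 0) ∧
    (∀ c ∈ Set.Ioo cs b, 0 < lam1 * pi1 * f1 c - lam0 * pi0 * f0 c) ∧
    StrictAntiOn (fun c => lam1 * pi1 * F1 c + lam0 * pi0 * (1 - F0 c)) (Set.Icc a cs) ∧
    StrictMonoOn (fun c => lam1 * pi1 * F1 c + lam0 * pi0 * (1 - F0 c)) (Set.Icc cs b) :=
  mlr_risk_sign_structure_general a b lam0 lam1 pi0 pi1 hlam1 hpi1 F0 F1 f0 f1 hF0cont hF1cont hF0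
    hF1 hf0pos hmono cs hcs hcs_root
end

section
/- AUC as a two-sample probability: let μ0 and μ1 be probability measures on ℝ, suppose the CDF F0 of μ0 (defined by F0(c) = μ0((−∞,c])) restricts to a continuous strictly increasing bijection from ℝ onto (0,1), let Q0 : (0,1) → ℝ be its inverse, and let F1 be the CDF of μ1. Then ∫₀¹ (1 − F1(Q0(u))) du = (μ0 ⊗ μ1)({(x0, x1) ∈ ℝ × ℝ : x1 > x0}); that is, the area under the parametric ROC curve equals the probability that an independent draw from μ1 exceeds an independent draw from μ0. -/
/-!
Since `F0` is a strictly increasing CDF onto `(0,1)`, it pushes `μ0` forward to the uniform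
distribution on `(0,1)`. Substituting `u = F0 x` turns the integral into
`∫ (1 - F1 x) dμ0(x) = ∫ μ1 (x, ∞) dμ0(x)`, the iterated-integral form of
`(μ0 ⊗ μ1) {x0 < x1}`.
-/

open MeasureTheory Set

lemma integral_measureReal_prodMk_left {α β : Type*} [MeasurableSpace α] [MeasurableSpace β]
    {μ : Measure α} {ν : Measure β} [SFinite μ] [IsFiniteMeasure ν] {s : Set (α × β)}
    (hs : MeasurableSet s) :
    ∫ x, ν.real (Prod.mk x ⁻¹' s) ∂μ = (μ.prod ν).real s := by
  rw [measureReal_def, Measure.prod_apply hs, ← integral_toReal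
    (measurable_measure_prodMk_left hs).aemeasurable (ae_of_all _ fun _ ↦ measure_lt_top _ _)]
  rfl

lemma map_eq_volume_restrict_Ioo_of_strictMono_cdf {μ : Measure ℝ} [IsProbabilityMeasure μ]
    {F : ℝ → ℝ} (hF : ∀ c, F c = μ.real (Iic c)) (hmono : StrictMono F)
    (hrange : range F = Ioo 0 1) :
    μ.map F = volume.restrict (Ioo 0 1) := by
  have hmem (x : ℝ) : F x ∈ Ioo 0 1 := hrange ▸ mem_range_self x
  refine Measure.ext_of_Iic _ _ fun a ↦ ?_
  rw [Measure.map_apply hmono.monotone.measurable measurableSet_Iic,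
    Measure.restrict_apply measurableSet_Iic]
  rcases le_or_gt a 0 with ha0 | ha0
  · have hpre : F ⁻¹' Iic a = ∅ :=
      eq_empty_of_forall_notMem fun x hx ↦ (ha0.trans_lt (hmem x).1).not_ge hx
    have hinter : Iic a ∩ Ioo 0 1 = ∅ := by
      ext x; simp only [mem_inter_iff, mem_Iic, mem_Ioo, mem_empty_iff_false, iff_false]; grind
    simp [hpre, hinter]
  rcases lt_or_ge a 1 with ha1 | ha1
  · obtain ⟨b, rfl⟩ : a ∈ range F := hrange ▸ ⟨ha0, ha1⟩
    have hpre : F ⁻¹' Iic (F b) = Iic b := by ext x; simp [hmono.le_iff_le]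
    have hinter : Iic (F b) ∩ Ioo 0 1 = Ioc 0 (F b) := by
      ext x; simp only [mem_inter_iff, mem_Iic, mem_Ioo, mem_Ioc]; grind
    rw [hpre, hinter, Real.volume_Ioc, ← ofReal_measureReal, ← hF]
    simp
  · have hpre : F ⁻¹' Iic a = univ :=
      eq_univ_of_forall fun x ↦ ((hmem x).2.trans_le ha1).le
    rw [hpre, inter_eq_right.2 fun x hx ↦ (hx.2.trans_le ha1).le]
    simp

theorem auc_eq_prob_exceed_general
    (μ0 μ1 : Measure ℝ) [IsProbabilityMeasure μ0] [IsProbabilityMeasure μ1]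
    (F0 F1 Q0 : ℝ → ℝ)
    (hF0def : ∀ c, F0 c = (μ0 (Set.Iic c)).toReal)
    (hF1def : ∀ c, F1 c = (μ1 (Set.Iic c)).toReal)
    (hF0mono : StrictMono F0)
    (hF0range : Set.range F0 = Set.Ioo 0 1)
    (hQ0left : ∀ x, Q0 (F0 x) = x) :
    ∫ u in Set.Ioo (0 : ℝ) 1, (1 - F1 (Q0 u)) =
      ((μ0.prod μ1) {q : ℝ × ℝ | q.1 < q.2}).toReal := by
  -- A measurable embedding allows the change of variables without measurability of the integrand.
  have hF0emb : MeasurableEmbedding F0 :=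
    hF0mono.monotone.measurable.measurableEmbedding hF0mono.injective
  calc ∫ u in Ioo 0 1, (1 - F1 (Q0 u))
      = ∫ u, (1 - F1 (Q0 u)) ∂μ0.map F0 := by
        rw [map_eq_volume_restrict_Ioo_of_strictMono_cdf hF0def hF0mono hF0range]
    _ = ∫ x, μ1.real (Prod.mk x ⁻¹' {q : ℝ × ℝ | q.1 < q.2}) ∂μ0 := by
        rw [hF0emb.integral_map]
        congr with x
        rw [hQ0left, hF1def, ← measureReal_def, ← probReal_compl_eq_one_sub measurableSet_Iic,
          compl_Iic]
        rfl
    _ = _ := integral_measureReal_prodMk_left (measurableSet_lt measurable_fst measurable_snd)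

/-- AUC as a two-sample probability: if the CDF `F0` of `μ0` is a continuous strictly
increasing bijection from `ℝ` onto `(0,1)` with inverse `Q0`, and `F1` is the CDF of
`μ1`, then `∫₀¹ (1 − F1(Q0(u))) du` equals the probability, under `μ0 ⊗ μ1`, that an
independent draw from `μ1` exceeds an independent draw from `μ0`. -/
theorem auc_eq_prob_exceed
    (μ0 μ1 : Measure ℝ) [IsProbabilityMeasure μ0] [IsProbabilityMeasure μ1]
    (F0 F1 Q0 : ℝ → ℝ)
    (hF0def : ∀ c, F0 c = (μ0 (Set.Iic c)).toReal)
    (hF1def : ∀ c, F1 c = (μ1 (Set.Iic c)).toReal)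
    (hF0cont : Continuous F0) (hF0mono : StrictMono F0)
    (hF0range : Set.range F0 = Set.Ioo 0 1)
    (hQ0left : ∀ x, Q0 (F0 x) = x)
    (hQ0right : ∀ u ∈ Set.Ioo (0 : ℝ) 1, F0 (Q0 u) = u) :
    ∫ u in Set.Ioo (0 : ℝ) 1, (1 - F1 (Q0 u)) =
      ((μ0.prod μ1) {q : ℝ × ℝ | q.1 < q.2}).toReal :=
  auc_eq_prob_exceed_general μ0 μ1 F0 F1 Q0 hF0def hF1def hF0mono hF0range hQ0left
end
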